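/- Let d ≥ 1 and t ≥ 1 be integers and σ > 0. Let A be a d×d real symmetric matrix, B a real d×t matrix, and K a t×t real symmetric matrix such that the (d+t)×(d+t) block matrix [[A, B], [Bᵀ, K]] is positive semidefinite. Let B' denote the d×(t−1) matrix formed by the first t−1 columns of B and K' the leading (t−1)×(t−1) principal submatrix of K. Then A − B (K + σ²I_t)⁻¹ Bᵀ ⪯ A − B' (K' + σ²I_{t−1})⁻¹ B'ᵀ in the Loewner order. -/

import Mathlib

/-! With `Σ = K + σ²I` positive definite and `P` the inclusion of the first `t - 1` coordinates,
the difference of the two matrices is `B (Σ⁻¹ - P (PᵀΣP)⁻¹ Pᵀ) Bᵀ`. The middle factor is PSD: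
conjugated by `Σ` it is the Schur complement of `PᵀΣP` in the PSD block matrix
`[Pᵀ; I] Σ [P, I]`. -/

open Matrix

namespace Matrix

theorem submatrix_add_smul_one {R m n : Type*} [Semiring R] [DecidableEq m] [DecidableEq n]
    {e : m → n} (he : Function.Injective e) (M : Matrix n n R) (c : R) :
    (M + c • (1 : Matrix n n R)).submatrix e e = M.submatrix e e + c • 1 := by
  rw [← submatrix_one _ he]
  rfl

variable {𝕜 l m n : Type*} [Field 𝕜] [PartialOrder 𝕜] [StarRing 𝕜] [StarOrderedRing 𝕜]
  [Fintype m] [DecidableEq m] [Fintype n] [DecidableEq n]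

theorem PosDef.posSemidef_inv_sub_mul_inv_mul {S : Matrix n n 𝕜} (hS : S.PosDef)
    (P : Matrix n m 𝕜) (hP : (Pᴴ * S * P).PosDef) :
    (S⁻¹ - P * (Pᴴ * S * P)⁻¹ * Pᴴ).PosSemidef := by
  have := hP.isUnit.invertible
  have hblocks : (fromBlocks (Pᴴ * S * P) (Pᴴ * S) (Pᴴ * S)ᴴ S).PosSemidef := by
    have h := hS.posSemidef.conjTranspose_mul_mul_same (fromCols P (1 : Matrix n n 𝕜))
    rw [conjTranspose_fromCols_eq_fromRows_conjTranspose, fromRows_mul, fromRows_mul_fromCols,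
      conjTranspose_one, Matrix.one_mul, Matrix.mul_one, Matrix.mul_one] at h
    rwa [conjTranspose_mul, hS.isHermitian.eq, conjTranspose_conjTranspose]
  have hS_det : IsUnit S.det := (isUnit_iff_isUnit_det S).mp hS.isUnit
  have h := ((hP.fromBlocks₁₁ _ _).mp hblocks).mul_mul_conjTranspose_same S⁻¹
  rw [hS.isHermitian.inv.eq, conjTranspose_mul, hS.isHermitian.eq, Matrix.mul_sub, Matrix.sub_mul,
    mul_nonsing_inv_cancel_right _ _ hS_det] at h
  simpa only [conjTranspose_conjTranspose, ← Matrix.mul_assoc, nonsing_inv_mul _ hS_det,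
    Matrix.one_mul, mul_nonsing_inv_cancel_right _ _ hS_det] using h

theorem PosDef.posSemidef_mul_inv_mul_sub_submatrix {S : Matrix n n 𝕜} (hS : S.PosDef)
    {e : m → n} (he : Function.Injective e) [Fintype l] (B : Matrix l n 𝕜) :
    (B * S⁻¹ * Bᴴ - B.submatrix id e * (S.submatrix e e)⁻¹ * (B.submatrix id e)ᴴ).PosSemidef := by
  set P : Matrix n m 𝕜 := (1 : Matrix n n 𝕜).submatrix id e
  have hBP : B * P = B.submatrix id e := by simpa using mul_submatrix_one (Equiv.refl n) e B
  have hSP : Pᴴ * S * P = S.submatrix e e := by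
    ext i j
    simp [P, mul_apply, one_apply]
  have h :=
    (hS.posSemidef_inv_sub_mul_inv_mul P (hSP ▸ hS.submatrix he)).mul_mul_conjTranspose_same B
  rw [← hBP, conjTranspose_mul, ← hSP]
  simpa only [Matrix.mul_sub, Matrix.sub_mul, Matrix.mul_assoc] using h

end Matrix

theorem posterior_covariance_monotone_drop_last_general
    (d t : ℕ) (σ : ℝ) (hσ : 0 < σ)
    (A : Matrix (Fin d) (Fin d) ℝ)
    (B : Matrix (Fin d) (Fin t) ℝ)
    (K : Matrix (Fin t) (Fin t) ℝ)
    (hblk : (Matrix.fromBlocks A B Bᵀ K).PosSemidef) :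
    ((A - (B.submatrix id (Fin.castLE (Nat.sub_le t 1))) *
        (K.submatrix (Fin.castLE (Nat.sub_le t 1)) (Fin.castLE (Nat.sub_le t 1))
          + σ ^ 2 • (1 : Matrix (Fin (t - 1)) (Fin (t - 1)) ℝ))⁻¹ *
        (B.submatrix id (Fin.castLE (Nat.sub_le t 1)))ᵀ)
      - (A - B * (K + σ ^ 2 • (1 : Matrix (Fin t) (Fin t) ℝ))⁻¹ * Bᵀ)).PosSemidef := by
  have he : Function.Injective (Fin.castLE (Nat.sub_le t 1)) := Fin.castLE_injective _
  have hK : K.PosSemidef := hblk.submatrix Sum.inr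
  have hKσ : (K + σ ^ 2 • (1 : Matrix (Fin t) (Fin t) ℝ)).PosDef :=
    .posSemidef_add hK (.smul .one (by positivity))
  have h := hKσ.posSemidef_mul_inv_mul_sub_submatrix he B
  rw [submatrix_add_smul_one he] at h
  simp only [conjTranspose_eq_transpose_of_trivial] at h
  rwa [sub_sub_sub_cancel_left]

/-- Schur-complement monotonicity under dropping the last query (Lemma B.4 of ZoRD):
if the block matrix `[[A, B], [Bᵀ, K]]` is PSD, then
`A − B (K + σ²I_t)⁻¹ Bᵀ ⪯ A − B' (K' + σ²I_{t−1})⁻¹ B'ᵀ` in the Loewner order,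
where `B'` consists of the first `t−1` columns of `B` and `K'` is the leading
`(t−1)×(t−1)` principal submatrix of `K`. -/
theorem posterior_covariance_monotone_drop_last
    (d t : ℕ) (hd : 1 ≤ d) (ht : 1 ≤ t) (σ : ℝ) (hσ : 0 < σ)
    (A : Matrix (Fin d) (Fin d) ℝ) (hA : A.IsHermitian)
    (B : Matrix (Fin d) (Fin t) ℝ)
    (K : Matrix (Fin t) (Fin t) ℝ) (hK : K.IsHermitian)
    (hblk : (Matrix.fromBlocks A B Bᵀ K).PosSemidef) :
    ((A - (B.submatrix id (Fin.castLE (Nat.sub_le t 1))) *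
        (K.submatrix (Fin.castLE (Nat.sub_le t 1)) (Fin.castLE (Nat.sub_le t 1))
          + σ ^ 2 • (1 : Matrix (Fin (t - 1)) (Fin (t - 1)) ℝ))⁻¹ *
        (B.submatrix id (Fin.castLE (Nat.sub_le t 1)))ᵀ)
      - (A - B * (K + σ ^ 2 • (1 : Matrix (Fin t) (Fin t) ℝ))⁻¹ * Bᵀ)).PosSemidef :=
  posterior_covariance_monotone_drop_last_general d t σ hσ A B K hblk
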